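/- Let g : [0,∞) → ℂ be a smooth, rapidly decreasing (Schwartz-class) function with g′(0) = 0 such that for j = 0, 1, 2, 3, the function g^{(j)}(u)·e^{u/2} has a limit as u → ∞ and is bounded by some integrable function on [0,∞). Then for every r ∈ ℂ with r ≠ 0 which is either real or purely imaginary with |r| ≤ 1/2, one has ∫₀^∞ (2/r³)(sin(ur) − u·sin(r)) · g‴(u) du = 2∫₀^∞ cos(ur) · g(u) du, both integrals being absolutely convergent. (This is the key integration-by-parts identity G(r,g) = H(r,g) used to express the wave distribution through the integrated Poisson kernel.) -/

import Mathlib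

open MeasureTheory Filter

private lemma aux_norm_sin_le (z : ℂ) : ‖Complex.sin z‖ ≤ Real.exp |z.im| := by
  have h : Complex.sin z
      = (Complex.exp (-z * Complex.I) - Complex.exp (z * Complex.I)) * Complex.I / 2 := rfl
  have h1 : ‖Complex.exp (-z * Complex.I)‖ = Real.exp z.im := by
    rw [Complex.norm_exp]; congr 1; simp
  have h2 : ‖Complex.exp (z * Complex.I)‖ = Real.exp (-z.im) := by
    rw [Complex.norm_exp]; congr 1; simp
  have key := norm_sub_le (Complex.exp (-z * Complex.I)) (Complex.exp (z * Complex.I))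
  rw [h1, h2] at key
  have e1 : Real.exp z.im ≤ Real.exp |z.im| := Real.exp_le_exp.2 (le_abs_self _)
  have e2 : Real.exp (-z.im) ≤ Real.exp |z.im| := Real.exp_le_exp.2 (neg_le_abs _)
  have hnorm : ‖Complex.sin z‖
      = ‖Complex.exp (-z * Complex.I) - Complex.exp (z * Complex.I)‖ / 2 := by
    rw [h, norm_div, norm_mul, Complex.norm_I, mul_one, Complex.norm_ofNat]
  rw [hnorm]
  linarith

private lemma aux_norm_cos_le (z : ℂ) : ‖Complex.cos z‖ ≤ Real.exp |z.im| := by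
  have h : Complex.cos z
      = (Complex.exp (z * Complex.I) + Complex.exp (-z * Complex.I)) / 2 := rfl
  have h1 : ‖Complex.exp (-z * Complex.I)‖ = Real.exp z.im := by
    rw [Complex.norm_exp]; congr 1; simp
  have h2 : ‖Complex.exp (z * Complex.I)‖ = Real.exp (-z.im) := by
    rw [Complex.norm_exp]; congr 1; simp
  have key := norm_add_le (Complex.exp (z * Complex.I)) (Complex.exp (-z * Complex.I))
  rw [h1, h2] at key
  have e1 : Real.exp z.im ≤ Real.exp |z.im| := Real.exp_le_exp.2 (le_abs_self _)
  have e2 : Real.exp (-z.im) ≤ Real.exp |z.im| := Real.exp_le_exp.2 (neg_le_abs _)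
  have hnorm : ‖Complex.cos z‖
      = ‖Complex.exp (z * Complex.I) + Complex.exp (-z * Complex.I)‖ / 2 := by
    rw [h, norm_div, Complex.norm_ofNat]
  rw [hnorm]
  linarith

private lemma aux_tendsto_zero (f : ℝ → ℂ) (G : ℝ → ℝ) (L : ℂ)
    (hL : Tendsto (fun u : ℝ => f u * Real.exp (u / 2)) atTop (nhds L))
    (hG : IntegrableOn G (Set.Ici 0))
    (hb : ∀ u : ℝ, 0 ≤ u → ‖f u‖ * Real.exp (u / 2) ≤ G u) :
    Tendsto (fun u : ℝ => f u * Real.exp (u / 2)) atTop (nhds 0) := by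
  rcases eq_or_ne L 0 with rfl | hL0
  · exact hL
  exfalso
  have hpos : 0 < ‖L‖ := norm_pos_iff.mpr hL0
  have hnorm : Tendsto (fun u : ℝ => ‖f u * (Real.exp (u / 2) : ℂ)‖) atTop (nhds ‖L‖) := hL.norm
  have hev : ∀ᶠ u in atTop, ‖L‖ / 2 < ‖f u * (Real.exp (u / 2) : ℂ)‖ :=
    hnorm.eventually (eventually_gt_nhds (half_lt_self hpos))
  obtain ⟨M, hM⟩ := eventually_atTop.1 hev
  set M' : ℝ := max M 0 with hM'
  have hsub : IntegrableOn G (Set.Ici M') :=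
    hG.mono_set (Set.Ici_subset_Ici.mpr (le_max_right _ _))
  have hconst : IntegrableOn (fun _ : ℝ => ‖L‖ / 2) (Set.Ici M') := by
    refine Integrable.mono' hsub aestronglyMeasurable_const ?_
    rw [ae_restrict_iff' measurableSet_Ici]
    filter_upwards with u hu
    have h0 : (0 : ℝ) ≤ u := le_trans (le_max_right M 0) hu
    have h1 := hM u (le_trans (le_max_left M 0) hu)
    rw [norm_mul, Complex.norm_real, Real.norm_eq_abs,
      abs_of_pos (Real.exp_pos _)] at h1
    have h2 : ‖L‖ / 2 ≤ G u := le_trans h1.le (hb u h0)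
    calc ‖‖L‖ / 2‖ = ‖L‖ / 2 := Real.norm_of_nonneg (by positivity)
      _ ≤ G u := h2
  rw [integrableOn_const_iff] at hconst
  rcases hconst with h | h
  · have : (0:ℝ) < ‖L‖ / 2 := by positivity
    rw [enorm_eq_zero] at h; rw [h] at this; exact lt_irrefl _ this
  · rw [Real.volume_Ici] at h; exact lt_irrefl _ h

/-- the integration-by-parts identity `G(r,g) = H(r,g)`: for a smooth
Schwartz-class `g` on `[0,∞)` with `g'(0)=0` such that `g^{(j)}(u)e^{u/2}` has a limit at
infinity and is bounded by an integrable function for `j = 0,1,2,3`, and for every `r ≠ 0`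
which is real or purely imaginary with `|r| ≤ 1/2`,
`∫₀^∞ (2/r³)(sin(ur) − u sin r) g‴(u) du = 2∫₀^∞ cos(ur) g(u) du`,
both integrals being absolutely convergent. -/
theorem statement15 (g : ℝ → ℂ)
    (hsmooth : ContDiff ℝ (⊤ : ℕ∞) g)
    (hschwartz : ∀ k n : ℕ, ∃ C : ℝ, ∀ u : ℝ, 0 ≤ u → u ^ k * ‖iteratedDeriv n g u‖ ≤ C)
    (hg'0 : deriv g 0 = 0)
    (hderiv : ∀ j, j ≤ 3 →
      (∃ L : ℂ, Tendsto (fun u : ℝ => iteratedDeriv j g u * Real.exp (u / 2)) atTop (nhds L)) ∧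
      (∃ G : ℝ → ℝ, IntegrableOn G (Set.Ici 0) ∧
        ∀ u : ℝ, 0 ≤ u → ‖iteratedDeriv j g u‖ * Real.exp (u / 2) ≤ G u))
    (r : ℂ) (hr0 : r ≠ 0)
    (hr : r.im = 0 ∨ (r.re = 0 ∧ ‖r‖ ≤ 1 / 2)) :
    IntegrableOn (fun u : ℝ =>
      2 / r ^ 3 * (Complex.sin (u * r) - u * Complex.sin r) * iteratedDeriv 3 g u)
      (Set.Ioi 0) ∧
    IntegrableOn (fun u : ℝ => Complex.cos (u * r) * g u) (Set.Ioi 0) ∧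
    (∫ u in Set.Ioi (0 : ℝ),
        2 / r ^ 3 * (Complex.sin (u * r) - u * Complex.sin r) * iteratedDeriv 3 g u)
      = 2 * ∫ u in Set.Ioi (0 : ℝ), Complex.cos (u * r) * g u := by
  classical
  -- |Im r| ≤ 1/2
  have himr : |r.im| ≤ 1 / 2 := by
    rcases hr with h | ⟨_, h⟩
    · rw [h]; norm_num
    · exact le_trans (Complex.abs_im_le_norm r) h
  have hexp_half : Real.exp (1 / 2) ≤ 2 := by
    have h2 : Real.exp (1 / 2) * Real.exp (1 / 2) = Real.exp 1 := by
      rw [← Real.exp_add]; norm_num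
    nlinarith [Real.exp_one_lt_d9, Real.exp_pos (1 / 2 : ℝ)]
  have hsinr : ‖Complex.sin r‖ ≤ 2 :=
    le_trans (aux_norm_sin_le r) (le_trans (Real.exp_le_exp.2 himr) hexp_half)
  have himur : ∀ u : ℝ, 0 ≤ u → |((u : ℂ) * r).im| ≤ u / 2 := by
    intro u hu
    have : ((u : ℂ) * r).im = u * r.im := by simp
    rw [this, abs_mul, abs_of_nonneg hu]
    calc u * |r.im| ≤ u * (1 / 2) := mul_le_mul_of_nonneg_left himr hu
      _ = u / 2 := by ring
  have hsin_b : ∀ u : ℝ, 0 ≤ u → ‖Complex.sin ((u : ℂ) * r)‖ ≤ Real.exp (u / 2) := fun u hu =>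
    le_trans (aux_norm_sin_le _) (Real.exp_le_exp.2 (himur u hu))
  have hcos_b : ∀ u : ℝ, 0 ≤ u → ‖Complex.cos ((u : ℂ) * r)‖ ≤ Real.exp (u / 2) := fun u hu =>
    le_trans (aux_norm_cos_le _) (Real.exp_le_exp.2 (himur u hu))
  have hub : ∀ u : ℝ, 0 ≤ u → u ≤ 2 * Real.exp (u / 2) := by
    intro u hu; nlinarith [Real.add_one_le_exp (u / 2)]
  -- the φ functions
  set φ0 : ℝ → ℂ := fun u => 2 / r ^ 3 * (Complex.sin (u * r) - u * Complex.sin r) with hφ0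
  set φ1 : ℝ → ℂ := fun u => 2 / r ^ 3 * (r * Complex.cos (u * r) - Complex.sin r) with hφ1
  set φ2 : ℝ → ℂ := fun u => -(2 / r) * Complex.sin (u * r) with hφ2
  set φ3 : ℝ → ℂ := fun u => -2 * Complex.cos (u * r) with hφ3
  -- derivatives of inner functions
  have hinner : ∀ u : ℝ, HasDerivAt (fun u : ℝ => (u : ℂ) * r) r u := by
    intro u
    simpa using Complex.ofRealCLM.hasDerivAt.mul_const r
  have hsin' : ∀ u : ℝ,
      HasDerivAt (fun u : ℝ => Complex.sin ((u : ℂ) * r)) (r * Complex.cos ((u : ℂ) * r)) u := by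
    intro u
    have h : HasDerivAt (fun z : ℂ => Complex.sin (z * r)) (Complex.cos ((u : ℂ) * r) * r)
        (u : ℂ) := by
      simpa using ((hasDerivAt_id ((u : ℂ))).mul_const r).csin
    simpa [mul_comm] using h.comp_ofReal
  have hcos' : ∀ u : ℝ,
      HasDerivAt (fun u : ℝ => Complex.cos ((u : ℂ) * r)) (-(r * Complex.sin ((u : ℂ) * r))) u := by
    intro u
    have h : HasDerivAt (fun z : ℂ => Complex.cos (z * r)) (-Complex.sin ((u : ℂ) * r) * r)
        (u : ℂ) := by
      simpa using ((hasDerivAt_id ((u : ℂ))).mul_const r).ccos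
    have h2 := h.comp_ofReal
    convert h2 using 1
    ring
  have hlin' : ∀ u : ℝ, HasDerivAt (fun u : ℝ => (u : ℂ) * Complex.sin r) (Complex.sin r) u := by
    intro u
    simpa using Complex.ofRealCLM.hasDerivAt.mul_const (Complex.sin r)
  -- derivatives of the φ functions
  have hφ0' : ∀ u : ℝ, HasDerivAt φ0 (φ1 u) u := by
    intro u
    have h := ((hsin' u).sub (hlin' u)).const_mul (2 / r ^ 3)
    exact h
  have hφ1' : ∀ u : ℝ, HasDerivAt φ1 (φ2 u) u := by
    intro u
    have h := (((hcos' u).const_mul r).sub (hasDerivAt_const u (Complex.sin r))).const_mul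
      (2 / r ^ 3)
    refine h.congr_deriv ?_
    rw [hφ2]
    field_simp
    ring
  have hφ2' : ∀ u : ℝ, HasDerivAt φ2 (φ3 u) u := by
    intro u
    have h := (hsin' u).const_mul (-(2 / r))
    refine h.congr_deriv ?_
    rw [hφ3]
    field_simp
  -- derivatives of iterated derivatives of g
  have hDg : ∀ (j : ℕ) (u : ℝ), HasDerivAt (iteratedDeriv j g) (iteratedDeriv (j + 1) g u) u := by
    intro j u
    have hd : DifferentiableAt ℝ (iteratedDeriv j g) u :=
      (hsmooth.differentiable_iteratedDeriv j (by exact_mod_cast ENat.coe_lt_top j)).differentiableAt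
    rw [iteratedDeriv_succ]
    exact hd.hasDerivAt
  have hDcont : ∀ j : ℕ, Continuous (iteratedDeriv j g) := fun j =>
    hsmooth.continuous_iteratedDeriv j (by exact_mod_cast le_top)
  -- continuity of the φ functions
  have hinnerc : Continuous fun u : ℝ => (u : ℂ) * r := Complex.continuous_ofReal.mul
    continuous_const
  have hφ0c : Continuous φ0 := continuous_const.mul ((Complex.continuous_sin.comp hinnerc).sub
    (Complex.continuous_ofReal.mul continuous_const))
  have hφ1c : Continuous φ1 := continuous_const.mul ((continuous_const.mul
    (Complex.continuous_cos.comp hinnerc)).sub continuous_const)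
  have hφ2c : Continuous φ2 := continuous_const.mul (Complex.continuous_sin.comp hinnerc)
  have hφ3c : Continuous φ3 := continuous_const.mul (Complex.continuous_cos.comp hinnerc)
  -- bounds on the φ functions
  have hone : ∀ u : ℝ, (1 : ℝ) ≤ Real.exp (u / 2) → True := fun _ _ => trivial
  have hb0 : ∀ u : ℝ, 0 ≤ u → ‖φ0 u‖ ≤ ‖2 / r ^ 3‖ * 5 * Real.exp (u / 2) := by
    intro u hu
    rw [hφ0]
    simp only [norm_mul]
    have h1 : ‖Complex.sin ((u : ℂ) * r) - (u : ℂ) * Complex.sin r‖ ≤ 5 * Real.exp (u / 2) := by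
      have hn : ‖(u : ℂ) * Complex.sin r‖ ≤ u * 2 := by
        rw [norm_mul, Complex.norm_real, Real.norm_of_nonneg hu]
        exact mul_le_mul_of_nonneg_left hsinr hu
      have h2 := hsin_b u hu
      have h3 := hub u hu
      have h4 := norm_sub_le (Complex.sin ((u : ℂ) * r)) ((u : ℂ) * Complex.sin r)
      nlinarith [Real.exp_pos (u / 2)]
    calc ‖(2 : ℂ) / r ^ 3‖ * ‖Complex.sin ((u : ℂ) * r) - (u : ℂ) * Complex.sin r‖
        ≤ ‖(2 : ℂ) / r ^ 3‖ * (5 * Real.exp (u / 2)) :=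
          mul_le_mul_of_nonneg_left h1 (norm_nonneg _)
      _ = ‖(2 : ℂ) / r ^ 3‖ * 5 * Real.exp (u / 2) := by ring
  have hb1 : ∀ u : ℝ, 0 ≤ u → ‖φ1 u‖ ≤ ‖2 / r ^ 3‖ * (‖r‖ + 2) * Real.exp (u / 2) := by
    intro u hu
    rw [hφ1]
    simp only [norm_mul]
    have hexp1 : (1 : ℝ) ≤ Real.exp (u / 2) := Real.one_le_exp (by positivity)
    have h1 : ‖r * Complex.cos ((u : ℂ) * r) - Complex.sin r‖
        ≤ (‖r‖ + 2) * Real.exp (u / 2) := by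
      have h2 := hcos_b u hu
      have h4 := norm_sub_le (r * Complex.cos ((u : ℂ) * r)) (Complex.sin r)
      rw [norm_mul] at h4
      nlinarith [norm_nonneg r, norm_nonneg (Complex.cos ((u : ℂ) * r))]
    calc ‖(2 : ℂ) / r ^ 3‖ * ‖r * Complex.cos ((u : ℂ) * r) - Complex.sin r‖
        ≤ ‖(2 : ℂ) / r ^ 3‖ * ((‖r‖ + 2) * Real.exp (u / 2)) :=
          mul_le_mul_of_nonneg_left h1 (norm_nonneg _)
      _ = ‖(2 : ℂ) / r ^ 3‖ * (‖r‖ + 2) * Real.exp (u / 2) := by ring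
  have hb2 : ∀ u : ℝ, 0 ≤ u → ‖φ2 u‖ ≤ ‖2 / r‖ * Real.exp (u / 2) := by
    intro u hu
    rw [hφ2]
    rw [norm_mul, norm_neg]
    exact mul_le_mul_of_nonneg_left (hsin_b u hu) (norm_nonneg _)
  have hb3 : ∀ u : ℝ, 0 ≤ u → ‖φ3 u‖ ≤ 2 * Real.exp (u / 2) := by
    intro u hu
    rw [hφ3]
    rw [norm_mul, norm_neg, Complex.norm_ofNat]
    exact mul_le_mul_of_nonneg_left (hcos_b u hu) (by norm_num)
  have hbcos : ∀ u : ℝ, 0 ≤ u → ‖Complex.cos ((u : ℂ) * r)‖ ≤ 1 * Real.exp (u / 2) := by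
    intro u hu; rw [one_mul]; exact hcos_b u hu
  -- generic integrability and decay
  have key : ∀ (φ : ℝ → ℂ) (Cφ : ℝ) (j : ℕ), Continuous φ →
      (∀ u : ℝ, 0 ≤ u → ‖φ u‖ ≤ Cφ * Real.exp (u / 2)) → j ≤ 3 →
      IntegrableOn (fun u : ℝ => φ u * iteratedDeriv j g u) (Set.Ioi 0) ∧
      Tendsto (fun u : ℝ => φ u * iteratedDeriv j g u) atTop (nhds 0) := by
    intro φ Cφ j hφc hφb hj
    obtain ⟨⟨L, hL⟩, ⟨G, hGint, hGb⟩⟩ := hderiv j hj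
    have hCφ : 0 ≤ Cφ := by
      have := le_trans (norm_nonneg (φ 0)) (hφb 0 le_rfl)
      simpa using this
    have htz : Tendsto (fun u : ℝ => iteratedDeriv j g u * Real.exp (u / 2)) atTop (nhds 0) :=
      aux_tendsto_zero _ G L hL hGint hGb
    constructor
    · refine Integrable.mono' ((hGint.mono_set Set.Ioi_subset_Ici_self).const_mul Cφ)
        ((hφc.mul (hDcont j)).aestronglyMeasurable.restrict) ?_
      rw [ae_restrict_iff' measurableSet_Ioi]
      filter_upwards with u hu
      have hu0 : (0 : ℝ) ≤ u := le_of_lt hu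
      rw [norm_mul]
      calc ‖φ u‖ * ‖iteratedDeriv j g u‖
          ≤ Cφ * Real.exp (u / 2) * ‖iteratedDeriv j g u‖ :=
            mul_le_mul_of_nonneg_right (hφb u hu0) (norm_nonneg _)
        _ = Cφ * (‖iteratedDeriv j g u‖ * Real.exp (u / 2)) := by ring
        _ ≤ Cφ * G u := mul_le_mul_of_nonneg_left (hGb u hu0) hCφ
    · refine squeeze_zero_norm'
        (a := fun u : ℝ => Cφ * ‖iteratedDeriv j g u * (Real.exp (u / 2) : ℂ)‖) ?_ ?_
      · filter_upwards [eventually_ge_atTop (0 : ℝ)] with u hu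
        rw [norm_mul, norm_mul, Complex.norm_real, Real.norm_of_nonneg (Real.exp_pos _).le]
        calc ‖φ u‖ * ‖iteratedDeriv j g u‖
            ≤ Cφ * Real.exp (u / 2) * ‖iteratedDeriv j g u‖ :=
              mul_le_mul_of_nonneg_right (hφb u hu) (norm_nonneg _)
          _ = Cφ * (‖iteratedDeriv j g u‖ * Real.exp (u / 2)) := by ring
      · have := (htz.norm).const_mul Cφ
        simpa using this
  obtain ⟨hI0, -⟩ := key φ0 _ 3 hφ0c hb0 le_rfl
  obtain ⟨-, hT0⟩ := key φ0 _ 2 hφ0c hb0 (by norm_num)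
  obtain ⟨hI1, -⟩ := key φ1 _ 2 hφ1c hb1 (by norm_num)
  obtain ⟨-, hT1⟩ := key φ1 _ 1 hφ1c hb1 (by norm_num)
  obtain ⟨hI2, -⟩ := key φ2 _ 1 hφ2c hb2 (by norm_num)
  obtain ⟨-, hT2⟩ := key φ2 _ 0 hφ2c hb2 (by norm_num)
  obtain ⟨hI3, -⟩ := key φ3 _ 0 hφ3c hb3 (by norm_num)
  obtain ⟨hIcos, -⟩ := key (fun u : ℝ => Complex.cos ((u : ℂ) * r)) 1 0
    (Complex.continuous_cos.comp hinnerc) hbcos (by norm_num)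
  -- values at 0
  have hφ0z : φ0 0 = 0 := by simp [hφ0]
  have hφ2z : φ2 0 = 0 := by simp [hφ2]
  have hD1z : iteratedDeriv 1 g 0 = 0 := by rw [iteratedDeriv_one]; exact hg'0
  -- integration by parts, step 1
  have step1 : (∫ u in Set.Ioi (0 : ℝ), (φ1 u * iteratedDeriv 2 g u + φ0 u * iteratedDeriv 3 g u))
      = 0 - φ0 0 * iteratedDeriv 2 g 0 := by
    refine integral_Ioi_of_hasDerivAt_of_tendsto
      ((hφ0c.mul (hDcont 2)).continuousWithinAt) (fun x _ => (hφ0' x).mul (hDg 2 x))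
      (hI1.add hI0) hT0
  have step2 : (∫ u in Set.Ioi (0 : ℝ), (φ2 u * iteratedDeriv 1 g u + φ1 u * iteratedDeriv 2 g u))
      = 0 - φ1 0 * iteratedDeriv 1 g 0 := by
    refine integral_Ioi_of_hasDerivAt_of_tendsto
      ((hφ1c.mul (hDcont 1)).continuousWithinAt) (fun x _ => (hφ1' x).mul (hDg 1 x))
      (hI2.add hI1) hT1
  have step3 : (∫ u in Set.Ioi (0 : ℝ), (φ3 u * iteratedDeriv 0 g u + φ2 u * iteratedDeriv 1 g u))
      = 0 - φ2 0 * iteratedDeriv 0 g 0 := by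
    refine integral_Ioi_of_hasDerivAt_of_tendsto
      ((hφ2c.mul (hDcont 0)).continuousWithinAt) (fun x _ => (hφ2' x).mul (hDg 0 x))
      (hI3.add hI2) hT2
  rw [integral_add hI1 hI0, hφ0z, zero_mul, sub_zero] at step1
  rw [integral_add hI2 hI1, hD1z, mul_zero, sub_zero] at step2
  rw [integral_add hI3 hI2, hφ2z, zero_mul, sub_zero] at step3
  -- final computation
  have hfin : (∫ u in Set.Ioi (0 : ℝ), φ3 u * iteratedDeriv 0 g u)
      = -2 * ∫ u in Set.Ioi (0 : ℝ), Complex.cos ((u : ℂ) * r) * g u := by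
    rw [show (fun u : ℝ => φ3 u * iteratedDeriv 0 g u)
        = fun u : ℝ => (-2 : ℂ) * (Complex.cos ((u : ℂ) * r) * g u) by
      funext u; rw [hφ3, iteratedDeriv_zero]; ring]
    exact integral_const_mul _ _
  have hIcos' : IntegrableOn (fun u : ℝ => Complex.cos ((u : ℂ) * r) * g u) (Set.Ioi 0) := by
    have := hIcos
    simpa [iteratedDeriv_zero] using this
  refine ⟨hI0, hIcos', ?_⟩
  have : (∫ u in Set.Ioi (0 : ℝ), φ0 u * iteratedDeriv 3 g u)
      = 2 * ∫ u in Set.Ioi (0 : ℝ), Complex.cos ((u : ℂ) * r) * g u := by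
    have e1 : (∫ u in Set.Ioi (0 : ℝ), φ0 u * iteratedDeriv 3 g u)
        = -(∫ u in Set.Ioi (0 : ℝ), φ1 u * iteratedDeriv 2 g u) := by
      linear_combination step1
    have e2 : (∫ u in Set.Ioi (0 : ℝ), φ1 u * iteratedDeriv 2 g u)
        = -(∫ u in Set.Ioi (0 : ℝ), φ2 u * iteratedDeriv 1 g u) := by
      linear_combination step2
    have e3 : (∫ u in Set.Ioi (0 : ℝ), φ2 u * iteratedDeriv 1 g u)
        = -(∫ u in Set.Ioi (0 : ℝ), φ3 u * iteratedDeriv 0 g u) := by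
      linear_combination step3
    rw [e1, e2, e3, hfin]
    ring
  exact this
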